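/- arXiv:2405.09402 — 4 statements merged into one kernel-verified Lean document; each statement's English description precedes it below -/
import Mathlib

section
/- For every integer t ≥ 1 and d ≥ 1, there exists a subset X of [t]^d (the d-dimensional grid {1,...,t}^d) of size at least t^(d-2)/d such that X contains no three distinct collinear points. -/
/-- For every integer t ≥ 1 and d ≥ 1, there exists a subset X of [t]^d
of size at least t^(d-2)/d containing no three distinct collinear points. -/
theorem stmt_0 (t d : ℕ) (ht : 1 ≤ t) (hd : 1 ≤ d) :
    ∃ X : Finset (Fin d → ℤ),
      (∀ x ∈ X, ∀ i, 1 ≤ x i ∧ x i ≤ (t : ℤ)) ∧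
      ((t : ℚ) ^ d / ((d : ℚ) * (t : ℚ) ^ 2) ≤ (X.card : ℚ)) ∧
      (∀ x ∈ X, ∀ y ∈ X, ∀ z ∈ X, x ≠ y → x ≠ z → y ≠ z →
        ¬ ∃ lam mu : ℝ, lam + mu = 1 ∧
          (fun i => (z i : ℝ)) = fun i => lam * (x i : ℝ) + mu * (y i : ℝ)) := by
  classical
  set G : Finset (Fin d → ℤ) := Fintype.piFinset (fun _ => Finset.Icc (1:ℤ) t) with hGdef
  set T : Finset ℤ := Finset.Icc (d : ℤ) (d * t^2) with hTdef
  have hmemG : ∀ x ∈ G, ∀ i, 1 ≤ x i ∧ x i ≤ (t:ℤ) := by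
    intro x hx i
    rw [hGdef, Fintype.mem_piFinset] at hx
    simpa [Finset.mem_Icc] using hx i
  have hmaps : ∀ x ∈ G, (∑ i, (x i)^2) ∈ T := by
    intro x hx
    rw [hTdef, Finset.mem_Icc]
    constructor
    · calc (d:ℤ) = ∑ _i : Fin d, 1 := by simp
        _ ≤ ∑ i, (x i)^2 := Finset.sum_le_sum fun i _ => by
            obtain ⟨h1, h2⟩ := hmemG x hx i; nlinarith
    · calc ∑ i, (x i)^2 ≤ ∑ _i : Fin d, (t:ℤ)^2 := Finset.sum_le_sum fun i _ => by
            obtain ⟨h1, h2⟩ := hmemG x hx i; nlinarith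
        _ = d * t^2 := by simp [mul_comm]
  have hGcard : G.card = t ^ d := by
    simp [hGdef, Fintype.card_piFinset]
  have hTcardZ : (T.card : ℤ) = d * t^2 + 1 - d := by
    rw [hTdef, Int.card_Icc]
    rw [Int.toNat_of_nonneg]
    have : (d:ℤ) ≤ d * t^2 := by
      have ht2 : (1:ℤ) ≤ (t:ℤ) := by exact_mod_cast ht
      have h1 : (1:ℤ) ≤ (t:ℤ)^2 := by nlinarith
      have h0d : (0:ℤ) ≤ (d:ℤ) := Int.ofNat_nonneg d
      have := mul_le_mul_of_nonneg_left h1 h0d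
      linarith
    linarith
  have hTpos : 0 < T.card := by
    have ht2 : (1:ℤ) ≤ (t:ℤ) := by exact_mod_cast ht
    have : (1:ℤ) ≤ (t:ℤ)^2 := by nlinarith
    have hd' : (1:ℤ) ≤ (d:ℤ) := by exact_mod_cast hd
    have : (0:ℤ) < (T.card : ℤ) := by rw [hTcardZ]; nlinarith
    exact_mod_cast this
  have hTle : (T.card : ℚ) ≤ (d:ℚ) * (t:ℚ)^2 := by
    have hd' : (1:ℤ) ≤ (d:ℤ) := by exact_mod_cast hd
    have : (T.card : ℤ) ≤ (d:ℤ) * (t:ℤ)^2 := by rw [hTcardZ]; linarith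
    exact_mod_cast this
  have hsum : G.card = ∑ b ∈ T, (G.filter (fun x => ∑ i, (x i)^2 = b)).card :=
    Finset.card_eq_sum_card_fiberwise hmaps
  have hTne : T.Nonempty := Finset.card_pos.mp hTpos
  obtain ⟨b, hbT, hble⟩ :
      ∃ b ∈ T, (G.card : ℚ)/T.card ≤ ((G.filter (fun x => ∑ i, (x i)^2 = b)).card : ℚ) := by
    apply Finset.exists_le_of_sum_le hTne
    rw [Finset.sum_const, nsmul_eq_mul, mul_div_cancel₀]
    · have : ((G.card : ℚ)) = ∑ b ∈ T, ((G.filter (fun x => ∑ i, (x i)^2 = b)).card : ℚ) := by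
        exact_mod_cast hsum
      exact le_of_eq this
    · exact_mod_cast hTpos.ne'
  set X : Finset (Fin d → ℤ) := G.filter (fun x => ∑ i, (x i)^2 = b) with hXdef
  have hXsub : ∀ x ∈ X, x ∈ G := fun x hx => (Finset.mem_filter.mp hx).1
  have hXval : ∀ x ∈ X, ∑ i, (x i)^2 = b := fun x hx => (Finset.mem_filter.mp hx).2
  refine ⟨X, fun x hx => hmemG x (hXsub x hx), ?_, ?_⟩
  · have h1 : (t:ℚ)^d / ((d:ℚ) * (t:ℚ)^2) ≤ (G.card : ℚ) / T.card := by
      rw [hGcard]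
      push_cast
      apply div_le_div_of_nonneg_left (by positivity) (by exact_mod_cast hTpos) hTle
    exact h1.trans hble
  · rintro x hx y hy z hz hxy hxz hyz ⟨lam, mu, hlm, heq⟩
    have hz2 : ∀ i, (z i:ℝ) = lam*(x i:ℝ) + mu*(y i:ℝ) := fun i => congrFun heq i
    have castR : ∀ w ∈ X, (∑ i, ((w i:ℝ))^2) = (b:ℝ) := by
      intro w hw
      have := hXval w hw
      exact_mod_cast congrArg (Int.cast : ℤ → ℝ) this
    set C : ℝ := ∑ i, (x i:ℝ)*(y i:ℝ) with hC
    have expand : (b:ℝ) = lam^2*(b:ℝ) + 2*lam*mu*C + mu^2*(b:ℝ) := by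
      have h1 : ∑ i, (z i:ℝ)^2
          = ∑ i, (lam^2*(x i:ℝ)^2 + 2*lam*mu*((x i:ℝ)*(y i:ℝ)) + mu^2*(y i:ℝ)^2) := by
        apply Finset.sum_congr rfl
        intro i _; rw [hz2 i]; ring
      rw [Finset.sum_add_distrib, Finset.sum_add_distrib, ← Finset.mul_sum, ← Finset.mul_sum,
        ← Finset.mul_sum] at h1
      rw [castR x hx, castR y hy, ← hC] at h1
      rw [← h1, castR z hz]
    have hlam : lam = 1 - mu := by linarith
    subst hlam
    have hSpos : 0 < ∑ i, ((x i:ℝ) - (y i:ℝ))^2 := by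
      obtain ⟨i0, hi0⟩ := Function.ne_iff.mp hxy
      apply Finset.sum_pos' (fun i _ => sq_nonneg _)
      refine ⟨i0, Finset.mem_univ _, ?_⟩
      have h : (x i0 : ℝ) - (y i0 : ℝ) ≠ 0 := sub_ne_zero.mpr (by exact_mod_cast hi0)
      positivity
    have hSexp : ∑ i, ((x i:ℝ) - (y i:ℝ))^2 = 2*(b:ℝ) - 2*C := by
      have h1 : ∑ i, ((x i:ℝ) - (y i:ℝ))^2
          = ∑ i, ((x i:ℝ)^2 + (y i:ℝ)^2 - 2*((x i:ℝ)*(y i:ℝ))) := by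
        apply Finset.sum_congr rfl
        intro i _; ring
      rw [h1, Finset.sum_sub_distrib, Finset.sum_add_distrib, ← Finset.mul_sum,
        castR x hx, castR y hy, ← hC]
      ring
    have hCb : C - (b:ℝ) < 0 := by
      rw [hSexp] at hSpos; linarith
    have key : mu * (1 - mu) * (C - (b:ℝ)) = 0 := by linear_combination (-(1:ℝ)/2) * expand
    have hmu : mu * (1 - mu) = 0 := by
      rcases mul_eq_zero.mp key with h | h
      · exact h
      · exact absurd h hCb.ne
    rcases mul_eq_zero.mp hmu with h0 | h1
    · apply hxz
      funext i
      have h2 := hz2 i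
      rw [h0] at h2
      norm_num at h2
      exact h2.symm
    · apply hyz
      funext i
      have h2 := hz2 i
      have hmu1 : mu = 1 := by linarith
      rw [hmu1] at h2
      norm_num at h2
      exact h2.symm
end

section
/- Let n be prime, S ⊆ 𝔽_n with |S| = ε·n, and let X be a finite set of distinct vectors in (𝔽_n)^d with |X| ≥ 8/ε. For b ∈ (𝔽_n)^(d+1) let f_b(x) = b_0 + Σ_{i=1}^d b_i x_i, and let N(b) = |{x ∈ X : f_b(x) ∈ S}|. Then the number of b ∈ (𝔽_n)^(d+1) with N(b) ≥ (ε/2)|X| is at least n^(d+1)/2. -/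
open Finset

section aux
variable {n : ℕ} [Fact n.Prime] {d : ℕ}

/-- Count of b with f_b(x) = s is n^d. -/
lemma countA (x : Fin d → ZMod n) (s : ZMod n) :
    (univ.filter fun b : ZMod n × (Fin d → ZMod n) =>
      b.1 + ∑ i, b.2 i * x i = s).card = n ^ d := by
  have h : n ^ d = (univ : Finset (Fin d → ZMod n)).card := by
    simp [ZMod.card]
  rw [h]
  apply Finset.card_nbij' (fun b => b.2) (fun w => (s - ∑ i, w i * x i, w))
  · intro a _; simp
  · intro a _; simp
  · intro a ha
    simp only [mem_coe, mem_filter] at ha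
    obtain ⟨-, h2⟩ := ha
    apply Prod.ext
    · simp [← h2]
    · rfl
  · intro a _; rfl

/-- Fibers of a nonzero linear functional all have size n^d / n. -/
lemma countW (c : Fin d → ZMod n) (hc : c ≠ 0) (u : ZMod n) :
    ((univ.filter fun w : Fin d → ZMod n => ∑ i, w i * c i = u).card : ℝ)
      = (n : ℝ) ^ d / n := by
  classical
  obtain ⟨j, hj⟩ : ∃ j, c j ≠ 0 := by
    by_contra h
    push_neg at h
    exact hc (funext h)
  have preim : ∀ u : ZMod n, ∑ i, (fun i => if i = j then u * (c j)⁻¹ else 0) i * c i = u := by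
    intro u
    rw [Finset.sum_eq_single j]
    · simp [hj]
    · intro i _ hij; simp [hij]
    · simp
  have hsame : ∀ u : ZMod n,
      (univ.filter fun w : Fin d → ZMod n => ∑ i, w i * c i = u).card
        = (univ.filter fun w : Fin d → ZMod n => ∑ i, w i * c i = 0).card := by
    intro u
    set w₀ : Fin d → ZMod n := fun i => if i = j then u * (c j)⁻¹ else 0 with hw₀
    apply Finset.card_nbij' (fun w => w - w₀) (fun w => w + w₀)
    · intro a ha
      simp only [mem_coe, mem_filter, mem_univ, true_and] at ha ⊢
      have : ∑ i, (a - w₀) i * c i = (∑ i, a i * c i) - ∑ i, w₀ i * c i := by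
        rw [← Finset.sum_sub_distrib]; congr 1; ext i; simp [sub_mul]
      rw [this, ha, preim u, sub_self]
    · intro a ha
      simp only [mem_coe, mem_filter, mem_univ, true_and] at ha ⊢
      have : ∑ i, (a + w₀) i * c i = (∑ i, a i * c i) + ∑ i, w₀ i * c i := by
        rw [← Finset.sum_add_distrib]; congr 1; ext i; simp [add_mul]
      rw [this, ha, preim u, zero_add]
    · intro a _; simp
    · intro a _; simp
  have hsum : ∑ u : ZMod n, ((univ.filter fun w : Fin d → ZMod n =>
      ∑ i, w i * c i = u).card) = n ^ d := by
    rw [← Finset.card_eq_sum_card_fiberwise (fun w _ => mem_univ _)]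
    simp [ZMod.card]
  have hn : (0 : ℝ) < n := by
    exact_mod_cast (Fact.out : n.Prime).pos
  have key : (n : ℕ) * (univ.filter fun w : Fin d → ZMod n =>
      ∑ i, w i * c i = 0).card = n ^ d := by
    rw [← hsum, Finset.sum_congr rfl (fun u _ => hsame u)]
    simp [ZMod.card, mul_comm]
  rw [hsame u]
  have := congrArg (fun k : ℕ => (k : ℝ)) key
  push_cast at this
  field_simp
  linarith [this]

/-- Pairwise count: for x ≠ y, count of b with f_b(x) = s and f_b(y) = t is n^d / n. -/
lemma countB (x y : Fin d → ZMod n) (hxy : x ≠ y) (s t : ZMod n) :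
    ((univ.filter fun b : ZMod n × (Fin d → ZMod n) =>
      b.1 + ∑ i, b.2 i * x i = s ∧ b.1 + ∑ i, b.2 i * y i = t).card : ℝ)
      = (n : ℝ) ^ d / n := by
  classical
  have hc : (fun i => x i - y i) ≠ 0 := by
    intro h
    apply hxy
    ext i
    have := congrFun h i
    simp only [Pi.zero_apply] at this
    exact sub_eq_zero.mp this
  have hsplit : ∀ w : Fin d → ZMod n,
      ∑ i, w i * (x i - y i) = (∑ i, w i * x i) - ∑ i, w i * y i := by
    intro w; rw [← Finset.sum_sub_distrib]; congr 1; ext i; ring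
  rw [← countW (fun i => x i - y i) hc (s - t)]
  congr 1
  apply Finset.card_nbij' (fun b => b.2) (fun w => (s - ∑ i, w i * x i, w))
  · intro a ha
    simp only [mem_coe, mem_filter, mem_univ, true_and] at ha ⊢
    rw [hsplit]
    obtain ⟨h1, h2⟩ := ha
    linear_combination h1 - h2
  · intro a ha
    simp only [mem_coe, mem_filter, mem_univ, true_and] at ha ⊢
    rw [hsplit] at ha
    constructor
    · ring
    · linear_combination -ha
  · intro a ha
    simp only [mem_coe, mem_filter, mem_univ, true_and] at ha
    apply Prod.ext
    · simp [← ha.1]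
    · rfl
  · intro a _; rfl

/-- Count of b with f_b(x) ∈ S. -/
lemma countA' (S : Finset (ZMod n)) (x : Fin d → ZMod n) :
    ((univ.filter fun b : ZMod n × (Fin d → ZMod n) =>
      b.1 + ∑ i, b.2 i * x i ∈ S).card : ℝ) = S.card * (n : ℝ) ^ d := by
  classical
  rw [Finset.card_eq_sum_card_fiberwise
    (f := fun b : ZMod n × (Fin d → ZMod n) => b.1 + ∑ i, b.2 i * x i) (t := S)
    (fun b hb => by simp only [mem_coe, mem_filter] at hb ⊢; exact hb.2)]
  have : ∀ s ∈ S, ((univ.filter fun b : ZMod n × (Fin d → ZMod n) =>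
        b.1 + ∑ i, b.2 i * x i ∈ S).filter
        fun b => b.1 + ∑ i, b.2 i * x i = s).card = n ^ d := by
    intro s hs
    rw [← countA x s]
    congr 1
    ext b
    simp only [mem_filter, mem_univ, true_and]
    exact ⟨fun h => h.2, fun h => ⟨h ▸ hs, h⟩⟩
  rw [Finset.sum_congr rfl this]
  push_cast
  simp [mul_comm]

/-- Pairwise count with membership in S. -/
lemma countB' (S : Finset (ZMod n)) (x y : Fin d → ZMod n) (hxy : x ≠ y) :
    ((univ.filter fun b : ZMod n × (Fin d → ZMod n) =>
      b.1 + ∑ i, b.2 i * x i ∈ S ∧ b.1 + ∑ i, b.2 i * y i ∈ S).card : ℝ)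
      = (S.card : ℝ) ^ 2 * ((n : ℝ) ^ d / n) := by
  classical
  rw [Finset.card_eq_sum_card_fiberwise
    (f := fun b : ZMod n × (Fin d → ZMod n) =>
      (b.1 + ∑ i, b.2 i * x i, b.1 + ∑ i, b.2 i * y i)) (t := S ×ˢ S)
    (fun b hb => by
      simp only [mem_coe, mem_filter] at hb
      simp [Finset.mem_product, hb.2.1, hb.2.2])]
  have : ∀ p ∈ S ×ˢ S, (((univ.filter fun b : ZMod n × (Fin d → ZMod n) =>
        b.1 + ∑ i, b.2 i * x i ∈ S ∧ b.1 + ∑ i, b.2 i * y i ∈ S).filter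
        fun b => (b.1 + ∑ i, b.2 i * x i, b.1 + ∑ i, b.2 i * y i) = p).card : ℝ)
        = (n : ℝ) ^ d / n := by
    intro p hp
    rw [Finset.mem_product] at hp
    rw [← countB x y hxy p.1 p.2]
    congr 2
    ext b
    simp only [mem_filter, mem_univ, true_and, Prod.ext_iff]
    constructor
    · exact fun h => h.2
    · exact fun h => ⟨⟨h.1 ▸ hp.1, h.2 ▸ hp.2⟩, h⟩
  push_cast
  rw [Finset.sum_congr rfl this]
  rw [Finset.sum_const, nsmul_eq_mul, Finset.card_product]
  push_cast
  ring

end aux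

set_option maxHeartbeats 1000000 in
/-- With |S| = εn and |X| ≥ 8/ε, at least n^(d+1)/2 of the b's satisfy
|{x ∈ X : f_b(x) ∈ S}| ≥ (ε/2)|X|. -/
theorem stmt_5 (n : ℕ) [Fact n.Prime] (d : ℕ) (ε : ℝ) (hε : 0 < ε) (hε1 : ε ≤ 1)
    (S : Finset (ZMod n)) (hS : (S.card : ℝ) = ε * n)
    (X : Finset (Fin d → ZMod n)) (hX : 8 / ε ≤ (X.card : ℝ)) :
    (n : ℝ) ^ (d + 1) / 2 ≤
      Nat.card {b : ZMod n × (Fin d → ZMod n) //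
        (ε / 2) * (X.card : ℝ) ≤
          ((X.filter fun x => b.1 + ∑ i, b.2 i * x i ∈ S).card : ℝ)} := by
  classical
  set m : ℝ := (X.card : ℝ) with hm
  set T : ℝ := (n : ℝ) ^ (d + 1) with hT
  have hnpos : (0 : ℝ) < n := by exact_mod_cast (Fact.out : n.Prime).pos
  have hTA : T = (n : ℝ) ^ d * n := by rw [hT]; ring
  have hm8 : 8 ≤ ε * m := by
    rw [hm]
    calc (8 : ℝ) = ε * (8 / ε) := by field_simp
    _ ≤ ε * (X.card : ℝ) := by
        apply mul_le_mul_of_nonneg_left hX hε.le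
  have hmpos : 0 < m := by nlinarith
  -- notation for N
  set N : ZMod n × (Fin d → ZMod n) → ℝ :=
    fun b => ((X.filter fun x => b.1 + ∑ i, b.2 i * x i ∈ S).card : ℝ) with hN
  have hNb : ∀ b : ZMod n × (Fin d → ZMod n),
      N b = ∑ x ∈ X, if b.1 + ∑ i, b.2 i * x i ∈ S then (1 : ℝ) else 0 := by
    intro b
    rw [hN, Finset.sum_boole]
  have hcardV : (Fintype.card (ZMod n × (Fin d → ZMod n)) : ℝ) = T := by
    rw [hTA]
    simp [ZMod.card, mul_comm]
  -- first moment
  have h1 : ∑ b : ZMod n × (Fin d → ZMod n), N b = ε * m * T := by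
    simp only [hNb]
    rw [Finset.sum_comm]
    have : ∀ x ∈ X, (∑ b : ZMod n × (Fin d → ZMod n),
        if b.1 + ∑ i, b.2 i * x i ∈ S then (1 : ℝ) else 0) = ε * n * (n : ℝ) ^ d := by
      intro x _
      rw [Finset.sum_boole, countA' S x, hS]
    rw [Finset.sum_congr rfl this, Finset.sum_const, nsmul_eq_mul, hTA, ← hm]
    ring
  -- second moment
  have h2 : ∑ b : ZMod n × (Fin d → ZMod n), (N b) ^ 2
      = ε ^ 2 * m ^ 2 * T + ε * m * T - ε ^ 2 * m * T := by
    have hsq : ∀ b : ZMod n × (Fin d → ZMod n), (N b) ^ 2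
        = ∑ x ∈ X, ∑ y ∈ X, if (b.1 + ∑ i, b.2 i * x i ∈ S) ∧ (b.1 + ∑ i, b.2 i * y i ∈ S)
            then (1 : ℝ) else 0 := by
      intro b
      rw [sq, hNb, Finset.sum_mul_sum]
      apply Finset.sum_congr rfl; intro x _
      apply Finset.sum_congr rfl; intro y _
      by_cases hx : b.1 + ∑ i, b.2 i * x i ∈ S <;>
        by_cases hy : b.1 + ∑ i, b.2 i * y i ∈ S <;> simp [hx, hy]
    simp only [hsq]
    rw [Finset.sum_comm]
    have hswap : ∀ x ∈ X, (∑ b : ZMod n × (Fin d → ZMod n), ∑ y ∈ X,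
        if (b.1 + ∑ i, b.2 i * x i ∈ S) ∧ (b.1 + ∑ i, b.2 i * y i ∈ S) then (1:ℝ) else 0)
        = ∑ y ∈ X, ∑ b : ZMod n × (Fin d → ZMod n),
        if (b.1 + ∑ i, b.2 i * x i ∈ S) ∧ (b.1 + ∑ i, b.2 i * y i ∈ S) then (1:ℝ) else 0 :=
      fun x _ => Finset.sum_comm
    rw [Finset.sum_congr rfl hswap]
    set c1 : ℝ := ε * n * (n : ℝ) ^ d with hc1
    set c2 : ℝ := (ε * n) ^ 2 * ((n : ℝ) ^ d / n) with hc2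
    have hinner : ∀ x ∈ X, ∀ y ∈ X,
        (∑ b : ZMod n × (Fin d → ZMod n),
          if (b.1 + ∑ i, b.2 i * x i ∈ S) ∧ (b.1 + ∑ i, b.2 i * y i ∈ S) then (1:ℝ) else 0)
        = if x = y then c1 else c2 := by
      intro x _ y _
      rw [Finset.sum_boole]
      by_cases hxy : x = y
      · subst hxy
        simp only [and_self, if_true]
        rw [countA' S x, hS, hc1]
      · rw [if_neg hxy, countB' S x y hxy, hS, hc2]
    have hrow : ∀ x ∈ X, (∑ y ∈ X, if x = y then c1 else c2) = m * c2 + (c1 - c2) := by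
      intro x hx
      have : ∀ y ∈ X, (if x = y then c1 else c2)
          = c2 + (if x = y then c1 - c2 else 0) := by
        intro y _; by_cases h : x = y <;> simp [h]
      rw [Finset.sum_congr rfl this, Finset.sum_add_distrib, Finset.sum_const,
        Finset.sum_ite_eq, if_pos hx, nsmul_eq_mul, ← hm]
    calc ∑ x ∈ X, ∑ y ∈ X, (∑ b : ZMod n × (Fin d → ZMod n),
          if (b.1 + ∑ i, b.2 i * x i ∈ S) ∧ (b.1 + ∑ i, b.2 i * y i ∈ S) then (1:ℝ) else 0)
        = ∑ x ∈ X, (m * c2 + (c1 - c2)) := by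
          apply Finset.sum_congr rfl
          intro x hx
          rw [Finset.sum_congr rfl (hinner x hx), hrow x hx]
      _ = m * (m * c2 + (c1 - c2)) := by
          rw [Finset.sum_const, nsmul_eq_mul, ← hm]
      _ = ε ^ 2 * m ^ 2 * T + ε * m * T - ε ^ 2 * m * T := by
          rw [hc1, hc2, hTA]
          field_simp
          ring
  -- variance bound
  have hvar : ∑ b : ZMod n × (Fin d → ZMod n), (N b - ε * m) ^ 2 ≤ ε * m * T := by
    have expand : ∑ b : ZMod n × (Fin d → ZMod n), (N b - ε * m) ^ 2
        = (∑ b : ZMod n × (Fin d → ZMod n), (N b) ^ 2)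
          - (2 * (ε * m)) * (∑ b : ZMod n × (Fin d → ZMod n), N b)
          + (Fintype.card (ZMod n × (Fin d → ZMod n)) : ℝ) * (ε * m) ^ 2 := by
      have : ∀ a : ℝ, (a - ε * m) ^ 2 = a ^ 2 - (2 * (ε * m)) * a + (ε * m) ^ 2 :=
        fun a => by ring
      simp only [this]
      rw [Finset.sum_add_distrib, Finset.sum_sub_distrib, ← Finset.mul_sum,
        Finset.sum_const, nsmul_eq_mul, Finset.card_univ]
    rw [expand, h1, h2, hcardV]
    have hT0 : 0 ≤ T := by positivity
    nlinarith [mul_nonneg (mul_nonneg (sq_nonneg ε) hmpos.le) hT0]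
  -- Chebyshev
  set P : ZMod n × (Fin d → ZMod n) → Prop := fun b => (ε / 2) * m ≤ N b with hP
  have hbad : ((univ.filter fun b => ¬ P b).card : ℝ) * (ε * m / 2) ^ 2 ≤ ε * m * T := by
    calc ((univ.filter fun b => ¬ P b).card : ℝ) * (ε * m / 2) ^ 2
        = ∑ _b ∈ univ.filter fun b => ¬ P b, (ε * m / 2) ^ 2 := by
          rw [Finset.sum_const, nsmul_eq_mul]
      _ ≤ ∑ b ∈ univ.filter fun b => ¬ P b, (N b - ε * m) ^ 2 := by
          apply Finset.sum_le_sum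
          intro b hb
          rw [Finset.mem_filter, hP] at hb
          have hlt : N b < (ε / 2) * m := lt_of_not_ge hb.2
          have hN0 : 0 ≤ N b := by rw [hN]; positivity
          nlinarith
      _ ≤ ∑ b : ZMod n × (Fin d → ZMod n), (N b - ε * m) ^ 2 := by
          apply Finset.sum_le_sum_of_subset_of_nonneg (Finset.filter_subset _ _)
          intro b _ _; positivity
      _ ≤ ε * m * T := hvar
  have hT0 : 0 ≤ T := by positivity
  have hbad2 : ((univ.filter fun b => ¬ P b).card : ℝ) ≤ T / 2 := by
    set B : ℝ := ((univ.filter fun b => ¬ P b).card : ℝ) with hB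
    have hB0 : 0 ≤ B := by rw [hB]; positivity
    nlinarith [mul_le_mul_of_nonneg_left hm8 hB0]
  -- conclude
  have hcount : ((univ.filter P).card : ℝ) + ((univ.filter fun b => ¬ P b).card : ℝ)
      = T := by
    rw [← hcardV, ← Finset.card_univ]
    exact_mod_cast Finset.card_filter_add_card_filter_not (p := P)
  have hgood : (Nat.card {b : ZMod n × (Fin d → ZMod n) // (ε / 2) * m ≤ N b} : ℝ)
      = ((univ.filter P).card : ℝ) := by
    rw [Nat.card_eq_fintype_card, Fintype.card_subtype]
  calc T / 2 ≤ ((univ.filter P).card : ℝ) := by linarith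
    _ = _ := hgood.symm
end

section
/- (Varnavides-type theorem for 3-variable equations.) Let E: a_1 x_1 + a_2 x_2 + a_3 x_3 = 0 be an invariant equation (a_1 + a_2 + a_3 = 0, a_i ≠ 0 integers). Suppose R: (0,1] → ℕ is such that for every ε ∈ (0,1] and every N ≥ R(ε), every subset of {1,...,N} of size at least εN contains three distinct integers satisfying E. Then for every ε ∈ (0,1] and every sufficiently large prime n, every S ⊆ 𝔽_n with |S| ≥ εn contains at least n²/(2·R(ε/2)²) triples (s_1, s_2, s_3) of distinct elements with a_1 s_1 + a_2 s_2 + a_3 s_3 = 0 in 𝔽_n. -/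
open Finset

section VarnaAux

/-! ### Auxiliary lemmas for the Varnavides-type theorem -/

lemma varna_cross_check : ∀ x1 ∈ [1,2,3,4], ∀ x2 ∈ [1,2,3,4], ∀ x3 ∈ [1,2,3,4],
    ∀ y1 ∈ [1,2,5,6], ∀ y2 ∈ [1,2,5,6], ∀ y3 ∈ [1,2,5,6],
    x1 ≠ x2 → x1 ≠ x3 → x2 ≠ x3 → y1 ≠ y2 → y1 ≠ y3 → y2 ≠ y3 →
    (x1 - x3) * (y2 - y3) ≠ (y1 - y3) * (x2 - x3 : ℤ) := by decide

/-- For every invariant equation there is a 4-element solution-free subset of `[1,6]`. -/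
lemma varna_freeset (a1 a2 a3 : ℤ) (h1 : a1 ≠ 0) (h2 : a2 ≠ 0)
    (hsum : a1 + a2 + a3 = 0) :
    ∃ A : Finset ℕ, A ⊆ Finset.Icc 1 6 ∧ A.card = 4 ∧
      ∀ x1 ∈ A, ∀ x2 ∈ A, ∀ x3 ∈ A, x1 ≠ x2 → x1 ≠ x3 → x2 ≠ x3 →
        a1 * (x1:ℤ) + a2 * (x2:ℤ) + a3 * (x3:ℤ) ≠ 0 := by
  classical
  by_cases hT1 : ∀ x1 ∈ ({1,2,3,4} : Finset ℕ), ∀ x2 ∈ ({1,2,3,4} : Finset ℕ),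
      ∀ x3 ∈ ({1,2,3,4} : Finset ℕ), x1 ≠ x2 → x1 ≠ x3 → x2 ≠ x3 →
      a1 * (x1:ℤ) + a2 * (x2:ℤ) + a3 * (x3:ℤ) ≠ 0
  · exact ⟨{1,2,3,4}, by decide, by decide, hT1⟩
  · push_neg at hT1
    obtain ⟨x1, hx1, x2, hx2, x3, hx3, d12, d13, d23, hxeq⟩ := hT1
    refine ⟨{1,2,5,6}, by decide, by decide, ?_⟩
    intro y1 hy1 y2 hy2 y3 hy3 e12 e13 e23 hyeq
    have ex2 : a1 * ((x1:ℤ) - x3) + a2 * ((x2:ℤ) - x3) = 0 := by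
      linear_combination hxeq - (x3:ℤ) * hsum
    have ey2 : a1 * ((y1:ℤ) - y3) + a2 * ((y2:ℤ) - y3) = 0 := by
      linear_combination hyeq - (y3:ℤ) * hsum
    have key : a1 * a2 * (((x1:ℤ) - x3) * ((y2:ℤ) - y3) - ((y1:ℤ) - y3) * ((x2:ℤ) - x3)) = 0 := by
      linear_combination (a2 * ((y2:ℤ) - y3)) * ex2 - (a2 * ((x2:ℤ) - x3)) * ey2
    have hE : ((x1:ℤ) - x3) * ((y2:ℤ) - y3) = ((y1:ℤ) - y3) * ((x2:ℤ) - x3) := by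
      have hne := mul_ne_zero h1 h2
      have := (mul_eq_zero.1 key).resolve_left hne
      linarith [this]
    have mem1 : ∀ z ∈ ({1,2,3,4} : Finset ℕ), (z:ℤ) ∈ [1,2,3,4] := by decide
    have mem2 : ∀ z ∈ ({1,2,5,6} : Finset ℕ), (z:ℤ) ∈ [1,2,5,6] := by decide
    exact varna_cross_check (x1:ℤ) (mem1 x1 hx1) (x2:ℤ) (mem1 x2 hx2) (x3:ℤ) (mem1 x3 hx3)
      (y1:ℤ) (mem2 y1 hy1) (y2:ℤ) (mem2 y2 hy2) (y3:ℤ) (mem2 y3 hy3)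
      (by exact_mod_cast d12) (by exact_mod_cast d13) (by exact_mod_cast d23)
      (by exact_mod_cast e12) (by exact_mod_cast e13) (by exact_mod_cast e23) hE

lemma varna_dens (ε σ r : ℝ) (hε : 0 < ε) (hσ : ε ≤ σ) (hσ1 : σ ≤ 1)
    (hr : 8 / ε ≤ r) : 2 * σ * (1 - σ) + 2 * ε ^ 2 ≤ r * (σ - ε / 2) ^ 2 := by
  have h8 : 8 ≤ ε * r := by
    rw [div_le_iff₀ hε] at hr; linarith [hr]
  have key : 8 * (σ - ε/2)^2 ≥ 2*ε*σ*(1-σ) + 2*ε^3 := by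
    nlinarith [mul_nonneg (sub_nonneg.2 hσ) (by nlinarith : (0:ℝ) ≤ (8+2*ε)*σ - 2*ε + 2*ε^2)]
  have hsq : (0:ℝ) ≤ (σ - ε/2)^2 := sq_nonneg _
  nlinarith [mul_le_mul_of_nonneg_right h8 hsq]

variable {n : ℕ} [Fact n.Prime] (S : Finset (ZMod n)) (r : ℕ)

/-- The fiber of an affine map over `S`, intersected with `[1,r]`. -/
def varnaAb (b : ZMod n × ZMod n) : Finset ℕ :=
  (Finset.Icc 1 r).filter (fun x => b.1 * (x : ZMod n) + b.2 ∈ S)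

lemma varna_count_single (c : ZMod n) :
    (univ.filter (fun z : ZMod n => c + z ∈ S)).card = S.card := by
  apply Finset.card_bij (fun z _ => c + z)
  · intro a ha; simpa using (Finset.mem_filter.1 ha).2
  · intro a _ b _ h; exact add_left_cancel h
  · intro s hs; exact ⟨s - c, by simp [hs], by ring⟩

lemma varna_count_pair_same (u : ZMod n) :
    (univ.filter (fun b : ZMod n × ZMod n => b.1 * u + b.2 ∈ S)).card
      = n * S.card := by
  rw [Finset.card_filter, Fintype.sum_prod_type]
  have h : ∀ b1 : ZMod n,
      (∑ b2 : ZMod n, if b1 * u + b2 ∈ S then 1 else 0) = S.card := by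
    intro b1
    rw [← Finset.card_filter]
    exact varna_count_single S (b1 * u)
  rw [Finset.sum_congr rfl (fun b1 _ => h b1)]
  simp [ZMod.card]

lemma varna_count_pair_distinct (u v : ZMod n) (huv : u ≠ v) :
    (univ.filter (fun b : ZMod n × ZMod n => b.1 * u + b.2 ∈ S ∧ b.1 * v + b.2 ∈ S)).card
      = S.card * S.card := by
  have hne : u - v ≠ 0 := sub_ne_zero.2 huv
  rw [show S.card * S.card = (S ×ˢ S).card by rw [Finset.card_product]]
  apply Finset.card_bij (fun b _ => ((b.1 * u + b.2, b.1 * v + b.2) : ZMod n × ZMod n))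
  · intro b hb
    have := (Finset.mem_filter.1 hb).2
    simpa [Finset.mem_product] using this
  · intro b _ b' _ h
    have h1 : b.1 * u + b.2 = b'.1 * u + b'.2 := congrArg Prod.fst h
    have h2 : b.1 * v + b.2 = b'.1 * v + b'.2 := congrArg Prod.snd h
    have hb1 : b.1 * (u - v) = b'.1 * (u - v) := by linear_combination h1 - h2
    have e1 : b.1 = b'.1 := mul_right_cancel₀ hne hb1
    have e2 : b.2 = b'.2 := by linear_combination h1 - u * e1
    exact Prod.ext e1 e2
  · rintro ⟨s, t⟩ hst
    rw [Finset.mem_product] at hst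
    refine ⟨((s - t) * (u - v)⁻¹, s - (s - t) * (u - v)⁻¹ * u), ?_, ?_⟩
    · have key : (s - t) * (u - v)⁻¹ * (u - v) = s - t := by
        rw [mul_assoc, inv_mul_cancel₀ hne, mul_one]
      have hv : (s - t) * (u - v)⁻¹ * v + (s - (s - t) * (u - v)⁻¹ * u) = t := by
        linear_combination -key
      have hu : (s - t) * (u - v)⁻¹ * u + (s - (s - t) * (u - v)⁻¹ * u) = s := by ring
      simp only [Finset.mem_filter, Finset.mem_univ, true_and]
      exact ⟨by rw [hu]; exact hst.1, by rw [hv]; exact hst.2⟩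
    · have key : (s - t) * (u - v)⁻¹ * (u - v) = s - t := by
        rw [mul_assoc, inv_mul_cancel₀ hne, mul_one]
      have hv : (s - t) * (u - v)⁻¹ * v + (s - (s - t) * (u - v)⁻¹ * u) = t := by
        linear_combination -key
      have hu : (s - t) * (u - v)⁻¹ * u + (s - (s - t) * (u - v)⁻¹ * u) = s := by ring
      exact Prod.ext hu hv

lemma varna_cast_inj_Icc (hrn : r < n) {x y : ℕ} (hx : x ∈ Finset.Icc 1 r)
    (hy : y ∈ Finset.Icc 1 r) (hxy : x ≠ y) : ((x : ZMod n)) ≠ ((y : ZMod n)) := by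
  haveI : NeZero n := ⟨(Fact.out (p := n.Prime)).pos.ne'⟩
  intro h
  apply hxy
  have hx' : x < n := lt_of_le_of_lt (Finset.mem_Icc.1 hx).2 hrn
  have hy' : y < n := lt_of_le_of_lt (Finset.mem_Icc.1 hy).2 hrn
  calc x = (x : ZMod n).val := (ZMod.val_cast_of_lt hx').symm
    _ = (y : ZMod n).val := by rw [h]
    _ = y := ZMod.val_cast_of_lt hy'

lemma varna_sum_X : ∑ b : ZMod n × ZMod n, (varnaAb S r b).card = r * (n * S.card) := by
  simp only [varnaAb, Finset.card_filter]
  rw [Finset.sum_comm]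
  have inner : ∀ x ∈ Finset.Icc 1 r,
      (∑ b : ZMod n × ZMod n, if b.1 * (x:ZMod n) + b.2 ∈ S then 1 else 0) = n * S.card := by
    intro x _
    rw [← Finset.card_filter]
    exact varna_count_pair_same S ((x : ZMod n))
  rw [Finset.sum_congr rfl inner, Finset.sum_const, Nat.card_Icc]
  simp [smul_eq_mul]

lemma varna_sum_X_sq (hrn : r < n) :
    ∑ b : ZMod n × ZMod n, (varnaAb S r b).card ^ 2
      = r * (n * S.card) + (r * (r-1)) * (S.card * S.card) := by
  have hite : ∀ (P Q : Prop) [Decidable P] [Decidable Q],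
      (if P then (1:ℕ) else 0) * (if Q then 1 else 0) = if P ∧ Q then 1 else 0 := by
    intro P Q _ _
    by_cases hP : P <;> by_cases hQ : Q <;> simp [hP, hQ]
  have expand : ∀ b : ZMod n × ZMod n, (varnaAb S r b).card ^ 2 =
      ∑ x ∈ Finset.Icc 1 r, ∑ y ∈ Finset.Icc 1 r,
        if (b.1 * (x:ZMod n) + b.2 ∈ S ∧ b.1 * (y:ZMod n) + b.2 ∈ S) then 1 else 0 := by
    intro b
    rw [varnaAb, Finset.card_filter, sq, Finset.sum_mul_sum]
    exact Finset.sum_congr rfl fun x _ => Finset.sum_congr rfl fun y _ => hite _ _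
  rw [Finset.sum_congr rfl (fun b _ => expand b), Finset.sum_comm]
  rw [Finset.sum_congr rfl (fun x hx => Finset.sum_comm)]
  have inner : ∀ x ∈ Finset.Icc 1 r, ∀ y ∈ Finset.Icc 1 r,
      (∑ b : ZMod n × ZMod n,
        if (b.1 * (x:ZMod n) + b.2 ∈ S ∧ b.1 * (y:ZMod n) + b.2 ∈ S) then 1 else 0)
        = if x = y then n * S.card else S.card * S.card := by
    intro x hx y hy
    rw [← Finset.card_filter]
    by_cases hxy : x = y
    · subst hxy
      simp only [if_pos rfl, and_self]
      exact varna_count_pair_same S _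
    · rw [if_neg hxy]
      exact varna_count_pair_distinct S _ _ (varna_cast_inj_Icc r hrn hx hy hxy)
  rw [Finset.sum_congr rfl (fun x hx => Finset.sum_congr rfl (fun y hy => inner x hx y hy))]
  have diag : ∀ x ∈ Finset.Icc 1 r,
      (∑ y ∈ Finset.Icc 1 r, if x = y then n * S.card else S.card * S.card)
        = n * S.card + (r-1) * (S.card * S.card) := by
    intro x hx
    rw [← Finset.add_sum_erase _ _ hx, if_pos rfl]
    congr 1
    rw [Finset.sum_congr rfl (fun y hy => if_neg (Finset.ne_of_mem_erase hy).symm)]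
    rw [Finset.sum_const, Finset.card_erase_of_mem hx, Nat.card_Icc]
    simp [smul_eq_mul]
  rw [Finset.sum_congr rfl diag, Finset.sum_const, Nat.card_Icc]
  simp [smul_eq_mul]; ring

lemma varna_variance (hrn : r < n) (hr1 : 1 ≤ r) :
    ∑ b : ZMod n × ZMod n, ((n:ℝ) * ((varnaAb S r b).card : ℝ) - r * S.card)^2
      = r * (n:ℝ)^2 * S.card * ((n:ℝ) - S.card) := by
  have card_univ_prod : (Finset.univ : Finset (ZMod n × ZMod n)).card = n * n := by
    simp [Finset.card_univ, ZMod.card]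
  have expand : ∀ b : ZMod n × ZMod n,
      ((n:ℝ) * ((varnaAb S r b).card : ℝ) - r * S.card)^2
        = (n:ℝ)^2 * ((varnaAb S r b).card : ℝ)^2
          - 2*(n:ℝ)*r*S.card * ((varnaAb S r b).card : ℝ) + (r:ℝ)^2*(S.card:ℝ)^2 := by
    intro b; ring
  rw [Finset.sum_congr rfl (fun b _ => expand b)]
  rw [Finset.sum_add_distrib, Finset.sum_sub_distrib, ← Finset.mul_sum, ← Finset.mul_sum,
    Finset.sum_const, card_univ_prod, nsmul_eq_mul]
  have c1 : ∑ b : ZMod n × ZMod n, ((varnaAb S r b).card : ℝ)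
      = ((r * (n * S.card) : ℕ) : ℝ) := by
    rw [← varna_sum_X S r]; push_cast; rfl
  have c2 : ∑ b : ZMod n × ZMod n, ((varnaAb S r b).card : ℝ)^2
      = ((r * (n * S.card) + (r * (r-1)) * (S.card * S.card) : ℕ) : ℝ) := by
    rw [← varna_sum_X_sq S r hrn]; push_cast; rfl
  rw [c1, c2]
  have : ((r - 1 : ℕ) : ℝ) = (r:ℝ) - 1 := by
    push_cast [Nat.cast_sub hr1]; ring
  push_cast [this]
  ring

end VarnaAux

set_option maxHeartbeats 1000000 in
/-- Varnavides-type theorem for 3-variable invariant equations: if every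
subset of [N] of size εN contains a solution in distinct integers whenever N ≥ R(ε),
then for small ε and large primes n, every S ⊆ 𝔽_n of size ≥ εn contains at least
n²/(2 R(ε/2)²) triples of distinct elements solving the equation over 𝔽_n. -/
theorem stmt_11 (a1 a2 a3 : ℤ) (h1 : a1 ≠ 0) (h2 : a2 ≠ 0) (h3 : a3 ≠ 0)
    (hsum : a1 + a2 + a3 = 0) (R : ℝ → ℕ)
    (hR : ∀ ε : ℝ, 0 < ε → ε ≤ 1 → ∀ N : ℕ, R ε ≤ N →
      ∀ A : Finset ℕ, A ⊆ Finset.Icc 1 N → ε * N ≤ (A.card : ℝ) →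
        ∃ x1 ∈ A, ∃ x2 ∈ A, ∃ x3 ∈ A, x1 ≠ x2 ∧ x1 ≠ x3 ∧ x2 ≠ x3 ∧
          a1 * (x1 : ℤ) + a2 * (x2 : ℤ) + a3 * (x3 : ℤ) = 0)
    (ε : ℝ) (hε : 0 < ε) (hε1 : ε ≤ 1) :
    ∃ n0 : ℕ, ∀ n : ℕ, n.Prime → n0 ≤ n →
      ∀ S : Finset (ZMod n), ε * n ≤ (S.card : ℝ) →
        (n : ℝ) ^ 2 / (2 * (R (ε / 2) : ℝ) ^ 2) ≤
          Nat.card {s : ZMod n × ZMod n × ZMod n //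
            s.1 ∈ S ∧ s.2.1 ∈ S ∧ s.2.2 ∈ S ∧
            s.1 ≠ s.2.1 ∧ s.1 ≠ s.2.2 ∧ s.2.1 ≠ s.2.2 ∧
            (a1 : ZMod n) * s.1 + (a2 : ZMod n) * s.2.1 + (a3 : ZMod n) * s.2.2 = 0} := by
  classical
  set r := R (ε/2) with hrdef
  have hεhalf : 0 < ε/2 := half_pos hε
  have hεhalf1 : ε/2 ≤ 1 := by linarith
  -- Step 1: lower bound on r
  obtain ⟨A, hA6, hA4, hAfree⟩ := varna_freeset a1 a2 a3 h1 h2 hsum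
  set N : ℕ := ⌊(8:ℝ)/ε⌋₊ with hNdef
  have hN8 : (8:ℕ) ≤ N := by
    apply Nat.le_floor
    rw [le_div_iff₀ hε]
    push_cast; nlinarith
  have hNle : (N : ℝ) ≤ 8/ε := Nat.floor_le (by positivity)
  have hRN : N < r := by
    by_contra hle
    push_neg at hle
    have hsub : A ⊆ Finset.Icc 1 N :=
      hA6.trans (Finset.Icc_subset_Icc_right (by omega))
    have hcard : (ε/2) * N ≤ (A.card : ℝ) := by
      rw [hA4]
      have : (ε/2) * N ≤ (ε/2) * (8/ε) := by
        apply mul_le_mul_of_nonneg_left hNle (le_of_lt hεhalf)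
      have h4 : (ε/2) * (8/ε) = 4 := by field_simp; ring
      push_cast; linarith
    obtain ⟨x1, hx1, x2, hx2, x3, hx3, d12, d13, d23, heq⟩ :=
      hR (ε/2) hεhalf hεhalf1 N hle A hsub hcard
    exact hAfree x1 hx1 x2 hx2 x3 hx3 d12 d13 d23 heq
  have hr8 : (8:ℝ)/ε ≤ r := by
    have h1' : (8:ℝ)/ε < (N:ℝ) + 1 := Nat.lt_floor_add_one _
    have h2' : (N:ℝ) + 1 ≤ r := by exact_mod_cast hRN
    linarith
  have hrpos : 0 < r := by
    have : (0:ℝ) < r := lt_of_lt_of_le (by positivity) hr8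
    exact_mod_cast this
  -- Step 2: choose n0
  refine ⟨max (r+1) (⌈(r:ℝ)/ε^2⌉₊ + 1), ?_⟩
  intro n hp hn0 S hS
  haveI : Fact n.Prime := ⟨hp⟩
  haveI : NeZero n := ⟨hp.pos.ne'⟩
  have hrn : r < n := by
    have := le_trans (le_max_left (r+1) (⌈(r:ℝ)/ε^2⌉₊ + 1)) hn0
    omega
  have hnpos : 0 < n := hp.pos
  have hnR : (0:ℝ) < n := by exact_mod_cast hnpos
  have hrε2n : (r:ℝ) ≤ ε^2 * n := by
    have h1' : ⌈(r:ℝ)/ε^2⌉₊ + 1 ≤ n :=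
      le_trans (le_max_right (r+1) (⌈(r:ℝ)/ε^2⌉₊ + 1)) hn0
    have h2' : (r:ℝ)/ε^2 ≤ (⌈(r:ℝ)/ε^2⌉₊ : ℝ) := Nat.le_ceil _
    have h3' : ((⌈(r:ℝ)/ε^2⌉₊ : ℕ) : ℝ) + 1 ≤ n := by exact_mod_cast h1'
    rw [div_le_iff₀ (by positivity : (0:ℝ) < ε^2)] at h2'
    nlinarith
  set m := S.card with hmdef
  have hmn : m ≤ n := by
    have := Finset.card_le_univ S
    simpa [Finset.card_univ, ZMod.card] using this
  have hmnR : (m:ℝ) ≤ n := by exact_mod_cast hmn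
  have hm : ε * n ≤ (m:ℝ) := hS
  -- the three classes of b
  set X : ZMod n × ZMod n → ℕ := fun b => (varnaAb S r b).card with hXdef
  set Bad : Finset (ZMod n × ZMod n) :=
    Finset.univ.filter (fun b => ((X b : ℝ) < ε/2 * r)) with hBaddef
  set Good : Finset (ZMod n × ZMod n) :=
    Finset.univ.filter (fun b => b.1 ≠ 0 ∧ ε/2 * r ≤ (X b : ℝ)) with hGooddef
  set Zb : Finset (ZMod n × ZMod n) :=
    Finset.univ.filter (fun b => b.1 = 0) with hZbdef
  have hZbcard : Zb.card = n := by
    rw [hZbdef]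
    rw [show (Finset.univ.filter (fun b : ZMod n × ZMod n => b.1 = 0))
        = ({(0 : ZMod n)} ×ˢ (Finset.univ : Finset (ZMod n))) by
      ext ⟨b1, b2⟩; simp [Finset.mem_product, eq_comm]]
    simp [Finset.card_product, ZMod.card]
  have hcover : (Finset.univ : Finset (ZMod n × ZMod n)) ⊆ Bad ∪ Zb ∪ Good := by
    intro b _
    by_cases hb : (X b : ℝ) < ε/2 * r
    · simp [hBaddef, Finset.mem_union, hb]
    · by_cases hb0 : b.1 = 0
      · simp [hZbdef, Finset.mem_union, hb0]
      · simp [hGooddef, Finset.mem_union, hb0, not_lt.1 hb]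
  have hcards : (n*n : ℕ) ≤ Bad.card + Zb.card + Good.card := by
    calc (n*n : ℕ) = (Finset.univ : Finset (ZMod n × ZMod n)).card := by
          simp [Finset.card_univ, ZMod.card]
      _ ≤ (Bad ∪ Zb ∪ Good).card := Finset.card_le_card hcover
      _ ≤ (Bad ∪ Zb).card + Good.card := Finset.card_union_le _ _
      _ ≤ Bad.card + Zb.card + Good.card := by
          have := Finset.card_union_le Bad Zb; omega
  -- Chebyshev
  have hvar := varna_variance S r hrn hrpos
  have hBadptwise : ∀ b ∈ Bad, ((r:ℝ)*m - ε/2*r*n)^2 ≤ ((n:ℝ) * (X b : ℝ) - r * m)^2 := by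
    intro b hb
    have hb' : (X b : ℝ) < ε/2 * r := by
      have := (Finset.mem_filter.1 hb).2
      simpa using this
    have h0 : (0:ℝ) ≤ (r:ℝ)*m - ε/2*r*n := by nlinarith [Nat.cast_nonneg (α := ℝ) r]
    have h1' : (r:ℝ)*m - ε/2*r*n ≤ (r:ℝ)*m - n * (X b : ℝ) := by nlinarith
    calc ((r:ℝ)*m - ε/2*r*n)^2 ≤ ((r:ℝ)*m - n * (X b : ℝ))^2 := by
          exact pow_le_pow_left₀ h0 h1' 2
      _ = ((n:ℝ) * (X b : ℝ) - r * m)^2 := by ring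
  have hsum_bad : (Bad.card : ℝ) * ((r:ℝ)*m - ε/2*r*n)^2 ≤ (r:ℝ) * (n:ℝ)^2 * m * ((n:ℝ) - m) := by
    calc (Bad.card : ℝ) * ((r:ℝ)*m - ε/2*r*n)^2
        = ∑ _b ∈ Bad, ((r:ℝ)*m - ε/2*r*n)^2 := by
          rw [Finset.sum_const, nsmul_eq_mul]
      _ ≤ ∑ b ∈ Bad, ((n:ℝ) * (X b : ℝ) - r * m)^2 := Finset.sum_le_sum hBadptwise
      _ ≤ ∑ b : ZMod n × ZMod n, ((n:ℝ) * (X b : ℝ) - r * m)^2 :=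
          Finset.sum_le_sum_of_subset_of_nonneg (Finset.subset_univ _)
            (fun _ _ _ => sq_nonneg _)
      _ = (r:ℝ) * (n:ℝ)^2 * m * ((n:ℝ) - m) := hvar
  -- density inequality at σ = m/n
  have hσε : ε ≤ (m:ℝ)/n := (le_div_iff₀ hnR).2 hm
  have hσ1 : (m:ℝ)/n ≤ 1 := by rw [div_le_one hnR]; exact hmnR
  have hdens := varna_dens ε ((m:ℝ)/n) r hε hσε hσ1 hr8
  have hdens' : 2*(m:ℝ)*((n:ℝ)-m) + 2*ε^2*(n:ℝ)^2 ≤ (r:ℝ) * ((m:ℝ) - ε/2*n)^2 := by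
    have hmul := mul_le_mul_of_nonneg_right hdens (sq_nonneg (n:ℝ))
    have e1 : (2 * ((m:ℝ)/n) * (1 - (m:ℝ)/n) + 2*ε^2) * (n:ℝ)^2
        = 2*(m:ℝ)*((n:ℝ)-m) + 2*ε^2*(n:ℝ)^2 := by
      field_simp
    have e2 : (r:ℝ) * ((m:ℝ)/n - ε/2)^2 * (n:ℝ)^2 = (r:ℝ) * ((m:ℝ) - ε/2*n)^2 := by
      field_simp
    rw [e1, e2] at hmul
    linarith [hmul]
  -- conclude Bad.card small
  have hUpos : (0:ℝ) < (m:ℝ) - ε/2*n := by nlinarith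
  have hTpos : (0:ℝ) < (r:ℝ) * ((m:ℝ) - ε/2*n)^2 := by positivity
  have hBadfinal : 2 * (Bad.card : ℝ) ≤ (n:ℝ)^2 - 2*n := by
    set T : ℝ := (r:ℝ) * ((m:ℝ) - ε/2*n)^2 with hTdef
    have hrR : (0:ℝ) < (r:ℝ) := by exact_mod_cast hrpos
    have hBT : (Bad.card : ℝ) * T ≤ (n:ℝ)^2 * ((m:ℝ) * ((n:ℝ) - m)) := by
      have hsb : (r:ℝ) * ((Bad.card : ℝ) * T) ≤ (r:ℝ) * ((n:ℝ)^2 * ((m:ℝ) * ((n:ℝ) - m))) := by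
        calc (r:ℝ) * ((Bad.card : ℝ) * T) = (Bad.card : ℝ) * ((r:ℝ)*m - ε/2*r*n)^2 := by
              rw [hTdef]; ring
          _ ≤ (r:ℝ) * (n:ℝ)^2 * m * ((n:ℝ) - m) := hsum_bad
          _ = (r:ℝ) * ((n:ℝ)^2 * ((m:ℝ) * ((n:ℝ) - m))) := by ring
      exact le_of_mul_le_mul_left hsb hrR
    have hcn : (0:ℝ) ≤ ε/2*(n:ℝ) := by positivity
    have hub : (m:ℝ) - ε/2*n ≤ (n:ℝ) := by linarith
    have hsq : ((m:ℝ) - ε/2*n)^2 ≤ (n:ℝ)^2 := by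
      nlinarith [mul_nonneg (sub_nonneg.2 hub) (by linarith : (0:ℝ) ≤ (n:ℝ) + ((m:ℝ) - ε/2*n))]
    have hTle : T ≤ ε^2 * (n:ℝ)^3 := by
      calc T ≤ ε^2 * (n:ℝ) * (((m:ℝ) - ε/2*n)^2) :=
            mul_le_mul_of_nonneg_right hrε2n (sq_nonneg _)
        _ ≤ ε^2 * (n:ℝ) * (n:ℝ)^2 :=
            mul_le_mul_of_nonneg_left hsq (by positivity)
        _ = ε^2 * (n:ℝ)^3 := by ring
    have hstep2 : 2 * ((n:ℝ)^2 * ((m:ℝ) * ((n:ℝ) - m))) ≤ (n:ℝ)^2 * T - 2*ε^2*(n:ℝ)^4 := by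
      have := mul_le_mul_of_nonneg_left hdens' (sq_nonneg (n:ℝ))
      linarith [this]
    have hstep3 : 2*(n:ℝ)*T ≤ 2*ε^2*(n:ℝ)^4 := by
      have := mul_le_mul_of_nonneg_left hTle (by positivity : (0:ℝ) ≤ 2*(n:ℝ))
      linarith [this]
    have hfinal : (2 * (Bad.card : ℝ)) * T ≤ ((n:ℝ)^2 - 2*n) * T := by
      linarith [hBT, hstep2, hstep3]
    exact le_of_mul_le_mul_right hfinal hTpos
  -- Good is big
  have hGoodbig : (n:ℝ)^2/2 ≤ (Good.card : ℝ) := by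
    have hcR : ((n*n : ℕ):ℝ) ≤ (Bad.card : ℝ) + (Zb.card : ℝ) + (Good.card : ℝ) := by
      exact_mod_cast hcards
    rw [hZbcard] at hcR
    push_cast at hcR
    nlinarith
  -- the solution set
  set P : ZMod n × ZMod n × ZMod n → Prop := fun s =>
    s.1 ∈ S ∧ s.2.1 ∈ S ∧ s.2.2 ∈ S ∧
      s.1 ≠ s.2.1 ∧ s.1 ≠ s.2.2 ∧ s.2.1 ≠ s.2.2 ∧
      (a1 : ZMod n) * s.1 + (a2 : ZMod n) * s.2.1 + (a3 : ZMod n) * s.2.2 = 0 with hPdef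
  set Sol : Finset (ZMod n × ZMod n × ZMod n) := Finset.univ.filter P with hSoldef
  -- injection from Good into Sol × [1,r]²
  have hGoodle : Good.card ≤ Sol.card * (r * r) := by
    set g : (ZMod n × ZMod n × ZMod n) × ℕ × ℕ → ZMod n × ZMod n := fun p =>
      ((p.1.1 - p.1.2.1) * (((p.2.1 : ZMod n)) - ((p.2.2 : ZMod n)))⁻¹,
       p.1.1 - (p.1.1 - p.1.2.1) * (((p.2.1 : ZMod n)) - ((p.2.2 : ZMod n)))⁻¹ * (p.2.1 : ZMod n))
      with hgdef
    have hsurj : Set.SurjOn g ↑(Sol ×ˢ (Finset.Icc 1 r ×ˢ Finset.Icc 1 r)) ↑Good := by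
      intro b hb
      have hb' := Finset.mem_filter.1 (Finset.mem_coe.1 hb)
      obtain ⟨hb1, hbX⟩ := hb'.2
      obtain ⟨x1, hx1, x2, hx2, x3, hx3, d12, d13, d23, heq⟩ :=
        hR (ε/2) hεhalf hεhalf1 r le_rfl (varnaAb S r b)
          (Finset.filter_subset _ _) (by exact_mod_cast hbX)
      have hx1' := Finset.mem_filter.1 hx1
      have hx2' := Finset.mem_filter.1 hx2
      have hx3' := Finset.mem_filter.1 hx3
      have hc12 : ((x1 : ZMod n)) ≠ ((x2 : ZMod n)) :=
        varna_cast_inj_Icc r hrn hx1'.1 hx2'.1 d12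
      have hc13 : ((x1 : ZMod n)) ≠ ((x3 : ZMod n)) :=
        varna_cast_inj_Icc r hrn hx1'.1 hx3'.1 d13
      have hc23 : ((x2 : ZMod n)) ≠ ((x3 : ZMod n)) :=
        varna_cast_inj_Icc r hrn hx2'.1 hx3'.1 d23
      have hd : ((x1 : ZMod n)) - ((x2 : ZMod n)) ≠ 0 := sub_ne_zero.2 hc12
      -- distinctness of images
      have haff : ∀ u v : ZMod n, u ≠ v → b.1 * u + b.2 ≠ b.1 * v + b.2 := by
        intro u v huv hcontra
        apply hb1
        have : b.1 * (u - v) = 0 := by linear_combination hcontra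
        rcases mul_eq_zero.1 this with h | h
        · exact h
        · exact absurd (sub_eq_zero.1 h) huv
      -- the equation over ZMod n
      have heqF : (a1 : ZMod n) * (b.1 * (x1:ZMod n) + b.2)
          + (a2 : ZMod n) * (b.1 * (x2:ZMod n) + b.2)
          + (a3 : ZMod n) * (b.1 * (x3:ZMod n) + b.2) = 0 := by
        have hc : ((a1 * (x1:ℤ) + a2 * (x2:ℤ) + a3 * (x3:ℤ) : ℤ) : ZMod n) = 0 := by
          rw [heq]; simp
        have hs : ((a1 + a2 + a3 : ℤ) : ZMod n) = 0 := by rw [hsum]; simp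
        push_cast at hc hs
        linear_combination b.1 * hc + b.2 * hs
      refine ⟨((b.1 * (x1:ZMod n) + b.2, b.1 * (x2:ZMod n) + b.2, b.1 * (x3:ZMod n) + b.2),
        (x1, x2)), ?_, ?_⟩
      · rw [Finset.coe_product]
        refine ⟨?_, ?_⟩
        · rw [Finset.mem_coe, hSoldef, Finset.mem_filter]
          exact ⟨Finset.mem_univ _,
            hx1'.2, hx2'.2, hx3'.2,
            haff _ _ hc12, haff _ _ hc13, haff _ _ hc23, heqF⟩
        · rw [Finset.coe_product]
          exact ⟨Finset.mem_coe.2 hx1'.1, Finset.mem_coe.2 hx2'.1⟩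
      · rw [hgdef]
        have hfst : (b.1 * (x1:ZMod n) + b.2 - (b.1 * (x2:ZMod n) + b.2))
            * (((x1:ZMod n)) - ((x2:ZMod n)))⁻¹ = b.1 := by
          rw [show b.1 * (x1:ZMod n) + b.2 - (b.1 * (x2:ZMod n) + b.2)
              = b.1 * (((x1:ZMod n)) - ((x2:ZMod n))) by ring]
          rw [mul_assoc, mul_inv_cancel₀ hd, mul_one]
        simp only
        rw [hfst]
        exact Prod.ext rfl (by ring)
    calc Good.card ≤ (Sol ×ˢ (Finset.Icc 1 r ×ˢ Finset.Icc 1 r)).card :=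
        Finset.card_le_card_of_surjOn g hsurj
      _ = Sol.card * (r * r) := by
        rw [Finset.card_product, Finset.card_product, Nat.card_Icc]
        simp
  -- final conversion
  have hNatcard : Nat.card {s : ZMod n × ZMod n × ZMod n // P s} = Sol.card := by
    rw [Nat.card_eq_fintype_card, hSoldef]
    exact Fintype.card_subtype P
  have hGoodleR : (Good.card : ℝ) ≤ (Sol.card : ℝ) * ((r:ℝ) * r) := by
    exact_mod_cast hGoodle
  rw [hPdef] at hNatcard
  rw [show {s : ZMod n × ZMod n × ZMod n //
      s.1 ∈ S ∧ s.2.1 ∈ S ∧ s.2.2 ∈ S ∧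
      s.1 ≠ s.2.1 ∧ s.1 ≠ s.2.2 ∧ s.2.1 ≠ s.2.2 ∧
      (a1 : ZMod n) * s.1 + (a2 : ZMod n) * s.2.1 + (a3 : ZMod n) * s.2.2 = 0}
    = {s : ZMod n × ZMod n × ZMod n // P s} from rfl, hNatcard]
  rw [div_le_iff₀ (by positivity : (0:ℝ) < 2 * (r:ℝ)^2)]
  nlinarith [hGoodbig, hGoodleR]
end

section
/- Let n be prime, d ≥ 2, let X ⊆ (𝔽_n)^d with |X| ≤ m, and suppose every three distinct points of X are affinely independent over 𝔽_n. Fix s_1, s_2, s_3, s_4 ∈ 𝔽_n. Then the number of pairs (b, (x¹,x²,x³,x⁴)) with b ∈ (𝔽_n)^(d+1), x^j ∈ X distinct, and f_b(x^j) = s_j for j = 1,...,4, is at most m⁴·n^(d-2), where f_b(x) = b_0 + Σ_i b_i x_i. -/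
open Matrix

lemma fiber_card_le (n : ℕ) [Fact n.Prime] (d : ℕ) (hd : 2 ≤ d)
    (M : Matrix (Fin 3) (Fin (d+1)) (ZMod n))
    (hli : LinearIndependent (ZMod n) (fun j => M j))
    (t : Fin 3 → ZMod n) :
    Nat.card {v : Fin (d+1) → ZMod n // M.mulVec v = t} ≤ n ^ (d - 2) := by
  classical
  haveI : NeZero n := ⟨(Fact.out : n.Prime).ne_zero⟩
  by_cases hne : Nonempty {v : Fin (d+1) → ZMod n // M.mulVec v = t}
  · obtain ⟨⟨v₀, hv₀⟩⟩ := hne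
    have hker : Nat.card {v : Fin (d+1) → ZMod n // M.mulVec v = t}
        = Nat.card (LinearMap.ker M.mulVecLin) := by
      apply Nat.card_congr
      refine ⟨fun v => ⟨v.1 - v₀, ?_⟩, fun w => ⟨w.1 + v₀, ?_⟩, ?_, ?_⟩
      · simp [LinearMap.mem_ker, Matrix.mulVecLin_apply, Matrix.mulVec_sub, v.2, hv₀]
      · have := w.2
        simp only [LinearMap.mem_ker, Matrix.mulVecLin_apply] at this
        simp [Matrix.mulVec_add, this, hv₀]
      · intro v; ext : 1; simp
      · intro w; ext : 1; simp
    have hrankM : M.rank = 3 := by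
      have hinj : Function.Injective M.vecMulLinear := by
        rw [Matrix.coe_vecMulLinear]
        exact Matrix.vecMul_injective_iff.mpr hli
      rw [← Matrix.rank_transpose, Matrix.rank, Matrix.mulVecLin_transpose,
        LinearMap.finrank_range_of_inj hinj, Module.finrank_fin_fun]
    have hsum := LinearMap.finrank_range_add_finrank_ker M.mulVecLin
    rw [Module.finrank_fin_fun] at hsum
    have hrk : Module.finrank (ZMod n) (LinearMap.ker M.mulVecLin) = d - 2 := by
      have : Module.finrank (ZMod n) (LinearMap.range M.mulVecLin) = 3 := hrankM
      omega
    rw [hker, Nat.card_eq_fintype_card,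
      Module.card_eq_pow_finrank (K := ZMod n) (V := LinearMap.ker M.mulVecLin), hrk, ZMod.card]
  · rw [not_nonempty_iff] at hne
    simp [Nat.card_of_isEmpty]

/-- Double-counting bound: if every three distinct points of X ⊆ (𝔽_n)^d
are affinely independent and |X| ≤ m, then the number of pairs (b, (x¹,x²,x³,x⁴)) with
x^j ∈ X distinct and f_b(x^j) = s_j for all j is at most m⁴ · n^(d-2). -/
theorem stmt_18 (n : ℕ) [Fact n.Prime] (d : ℕ) (hd : 2 ≤ d) (m : ℕ)
    (X : Finset (Fin d → ZMod n)) (hX : X.card ≤ m)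
    (haff : ∀ x1 ∈ X, ∀ x2 ∈ X, ∀ x3 ∈ X, x1 ≠ x2 → x1 ≠ x3 → x2 ≠ x3 →
      ∀ c1 c2 c3 : ZMod n, c1 + c2 + c3 = 0 →
        (∀ i, c1 * x1 i + c2 * x2 i + c3 * x3 i = 0) →
        c1 = 0 ∧ c2 = 0 ∧ c3 = 0)
    (s : Fin 4 → ZMod n) :
    Nat.card {p : (ZMod n × (Fin d → ZMod n)) × (Fin 4 → Fin d → ZMod n) //
      (∀ j, p.2 j ∈ X) ∧ Function.Injective p.2 ∧
      ∀ j, p.1.1 + ∑ i, p.1.2 i * p.2 j i = s j} ≤ m ^ 4 * n ^ (d - 2) := by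
  classical
  haveI : NeZero n := ⟨(Fact.out : n.Prime).ne_zero⟩
  set Fib : (Fin 4 → Fin d → ZMod n) → Type _ := fun x =>
    {b : ZMod n × (Fin d → ZMod n) // (∀ j, x j ∈ X) ∧ Function.Injective x ∧
      ∀ j, b.1 + ∑ i, b.2 i * x j i = s j} with hFib
  have hcongr : Nat.card {p : (ZMod n × (Fin d → ZMod n)) × (Fin 4 → Fin d → ZMod n) //
      (∀ j, p.2 j ∈ X) ∧ Function.Injective p.2 ∧
      ∀ j, p.1.1 + ∑ i, p.1.2 i * p.2 j i = s j}
      = ∑ x : Fin 4 → Fin d → ZMod n, Nat.card (Fib x) := by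
    rw [Nat.card_congr (⟨fun p => ⟨p.1.2, p.1.1, p.2⟩, fun q => ⟨(q.2.1, q.1), q.2.2⟩,
      fun p => rfl, fun q => rfl⟩ : _ ≃ Σ x, Fib x), Nat.card_eq_fintype_card,
      Fintype.card_sigma]
    simp [Nat.card_eq_fintype_card]
  rw [hcongr]
  set S : Finset (Fin 4 → Fin d → ZMod n) :=
    Finset.univ.filter (fun x => (∀ j, x j ∈ X) ∧ Function.Injective x) with hS
  -- per-fiber bound
  have hbound : ∀ x ∈ S, Nat.card (Fib x) ≤ n ^ (d - 2) := by
    intro x hx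
    rw [hS, Finset.mem_filter] at hx
    obtain ⟨-, hmem, hinj⟩ := hx
    set ι : Fin 3 → Fin 4 := Fin.castLE (by norm_num) with hι
    set y : Fin 3 → Fin d → ZMod n := fun j => x (ι j) with hy
    set M : Matrix (Fin 3) (Fin (d+1)) (ZMod n) := Matrix.of (fun j => Fin.cons 1 (y j))
      with hM
    have hli : LinearIndependent (ZMod n) (fun j => M j) := by
      rw [Fintype.linearIndependent_iff]
      intro g hg
      have h0 : g 0 + g 1 + g 2 = 0 := by
        have := congrFun hg (0 : Fin (d+1))
        simpa [hM, Fin.sum_univ_three] using this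
      have hi : ∀ i, g 0 * y 0 i + g 1 * y 1 i + g 2 * y 2 i = 0 := by
        intro i
        have := congrFun hg (i.succ : Fin (d+1))
        simpa [hM, Fin.sum_univ_three] using this
      have hne01 : y 0 ≠ y 1 := fun h => absurd (hinj h) (by decide)
      have hne02 : y 0 ≠ y 2 := fun h => absurd (hinj h) (by decide)
      have hne12 : y 1 ≠ y 2 := fun h => absurd (hinj h) (by decide)
      obtain ⟨h1, h2, h3⟩ := haff (y 0) (hmem _) (y 1) (hmem _) (y 2) (hmem _)
        hne01 hne02 hne12 (g 0) (g 1) (g 2) h0 hi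
      intro j
      fin_cases j <;> assumption
    have key := fiber_card_le n d hd M hli (fun j => s (ι j))
    refine le_trans ?_ key
    have hmemb : ∀ b : Fib x, M.mulVec (Fin.cons b.1.1 b.1.2) = fun j => s (ι j) := by
      intro b
      funext j
      have hb := b.2.2.2 (ι j)
      show M j ⬝ᵥ Fin.cons b.1.1 b.1.2 = s (ι j)
      have hfun : (fun i => M j i * (Fin.cons b.1.1 b.1.2 : Fin (d+1) → ZMod n) i)
          = Fin.cons (b.1.1) (fun i => y j i * b.1.2 i) := by
        refine funext (Fin.cases ?_ ?_)
        · simp [hM]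
        · intro i; simp [hM]
      calc (∑ i, M j i * (Fin.cons b.1.1 b.1.2 : Fin (d+1) → ZMod n) i)
          = ∑ i, (Fin.cons (b.1.1) (fun i => y j i * b.1.2 i) : Fin (d+1) → ZMod n) i := by
            rw [hfun]
        _ = b.1.1 + ∑ i, y j i * b.1.2 i := by rw [Fin.sum_cons]
        _ = s (ι j) := by
            rw [← hb]
            congr 1
            exact Finset.sum_congr rfl (fun i _ => mul_comm _ _)
    let F : Fib x → {v // M.mulVec v = fun j => s (ι j)} :=
      fun b => ⟨Fin.cons b.1.1 b.1.2, hmemb b⟩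
    apply Nat.card_le_card_of_injective F
    intro b b' hbb'
    have h := congrArg Subtype.val hbb'
    change (Fin.cons b.1.1 b.1.2 : Fin (d+1) → ZMod n) = Fin.cons b'.1.1 b'.1.2 at h
    rw [Fin.cons_inj] at h
    exact Subtype.ext (Prod.ext h.1 h.2)
  have hzero : ∀ x ∉ S, Nat.card (Fib x) = 0 := by
    intro x hx
    have hx' : ¬((∀ j, x j ∈ X) ∧ Function.Injective x) := fun hc =>
      hx (by rw [hS, Finset.mem_filter]; exact ⟨Finset.mem_univ x, hc⟩)
    have : IsEmpty (Fib x) := ⟨fun b => hx' ⟨b.2.1, b.2.2.1⟩⟩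
    exact Nat.card_of_isEmpty
  have hScard : S.card ≤ m ^ 4 := by
    have hsub : S ⊆ Fintype.piFinset (fun _ : Fin 4 => X) := by
      intro x hx
      rw [hS, Finset.mem_filter] at hx
      exact Fintype.mem_piFinset.mpr hx.2.1
    calc S.card ≤ (Fintype.piFinset (fun _ : Fin 4 => X)).card := Finset.card_le_card hsub
      _ = X.card ^ 4 := by rw [Fintype.card_piFinset]; simp
      _ ≤ m ^ 4 := Nat.pow_le_pow_left hX 4
  calc (∑ x : Fin 4 → Fin d → ZMod n, Nat.card (Fib x))
      = ∑ x ∈ S, Nat.card (Fib x) := by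
        refine (Finset.sum_subset (Finset.subset_univ S) ?_).symm
        intro x _ hx; exact hzero x hx
    _ ≤ ∑ x ∈ S, n ^ (d - 2) := Finset.sum_le_sum hbound
    _ = S.card * n ^ (d - 2) := by rw [Finset.sum_const, smul_eq_mul]
    _ ≤ m ^ 4 * n ^ (d - 2) := Nat.mul_le_mul_right _ hScard
end
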